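/- Let L be a positive self-adjoint operator on a Hilbert space H, κ ∈ (0,1], δ ∈ (0, 1/2). Suppose D(L) is dense in the space H^δ (completion of D(L) under ‖L^δ · ‖). Then for every U ∈ H^δ, lim_{t→0} t^{(1−2δ)/(2κ)} ‖L^{1/2} e^{−tL^κ} U‖ = 0. -/

import Mathlib

/-!
The statement is in the spectral model: `H = L²(μ)` and `L` is multiplication by `ℓ ≥ 0`.
After multiplying by `t^{(1-2δ)/κ}`, the squared norm becomes `∫ g_t · ℓ^{2δ} U²` with
`g_t = t^{(1-2δ)/κ} ℓ^{1-2δ} e^{-2tℓ^κ}`. The bound `s^a e^{-2s} ≤ (a/2)^a` at `s = tℓ^κ`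
(the scalar form of the smoothing estimate `‖L^{1/2-δ} e^{-tL^κ}‖ ≤ C t^{-(1-2δ)/(2κ)}`) bounds
`g_t` uniformly in `t`, and `g_t → 0` pointwise as `t → 0⁺`. Since `ℓ^{2δ} U²` is integrable,
dominated convergence replaces the density argument.
-/

open MeasureTheory Filter Topology Real

theorem Real.rpow_mul_exp_neg_mul_le {a c s : ℝ} (ha : 0 < a) (hc : 0 < c) (hs : 0 ≤ s) :
    s ^ a * exp (-(c * s)) ≤ (a / c) ^ a := by
  have hs_le : s ≤ a / c * exp (c * s / a) := by
    calc s = a / c * (c * s / a) := by field_simp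
      _ ≤ a / c * exp (c * s / a) := by
        gcongr; linarith [add_one_le_exp (c * s / a)]
  calc s ^ a * exp (-(c * s))
      ≤ (a / c * exp (c * s / a)) ^ a * exp (-(c * s)) := by gcongr
    _ = (a / c) ^ a := by
      rw [mul_rpow (by positivity) (exp_pos _).le, ← exp_mul, div_mul_cancel₀ _ ha.ne',
        mul_assoc, ← exp_add, add_neg_cancel, exp_zero, mul_one]

theorem Real.rpow_div_mul_rpow_mul_exp_le {κ b t s : ℝ} (hκ : 0 < κ) (hb : 0 < b) (ht : 0 ≤ t)
    (hs : 0 ≤ s) : t ^ (b / κ) * s ^ b * exp (-(2 * (t * s ^ κ))) ≤ (b / κ / 2) ^ (b / κ) := by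
  have hts : t ^ (b / κ) * s ^ b = (t * s ^ κ) ^ (b / κ) := by
    rw [mul_rpow ht (rpow_nonneg hs κ), ← rpow_mul hs, mul_div_cancel₀ _ hκ.ne']
  rw [hts]
  exact rpow_mul_exp_neg_mul_le (div_pos hb hκ) two_pos (mul_nonneg ht (rpow_nonneg hs κ))

theorem Real.sq_rpow_half_mul_exp_neg {s : ℝ} (hs : 0 ≤ s) (δ r : ℝ) :
    (s ^ (1 / 2 : ℝ) * exp (-r)) ^ 2 = s ^ (1 - 2 * δ) * exp (-(2 * r)) * (s ^ δ) ^ 2 := by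
  have hsq : ∀ y : ℝ, (s ^ y) ^ 2 = s ^ (2 * y) := fun y => by
    rw [← rpow_natCast, ← rpow_mul hs, mul_comm]; norm_num
  have hexp : exp (-r) ^ 2 = exp (-(2 * r)) := by rw [← exp_nat_mul]; ring_nf
  rw [mul_pow, hsq, hsq, hexp, mul_right_comm, ← rpow_add' hs (by norm_num)]
  norm_num

theorem MeasureTheory.tendsto_integral_mul_of_bounded_of_tendsto_zero {X ι : Type*}
    [MeasurableSpace X] {μ : Measure X} {l : Filter ι} [l.IsCountablyGenerated]
    {g : ι → X → ℝ} {w : X → ℝ} {C : ℝ} (hw : Integrable w μ)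
    (hg_meas : ∀ᶠ i in l, AEStronglyMeasurable (g i) μ) (hg_bound : ∀ᶠ i in l, ∀ x, |g i x| ≤ C)
    (hg_lim : ∀ x, Tendsto (g · x) l (𝓝 0)) :
    Tendsto (fun i => ∫ x, g i x * w x ∂μ) l (𝓝 0) := by
  have key := tendsto_integral_filter_of_dominated_convergence (μ := μ) (l := l)
    (F := fun i x => g i x * w x) (f := fun _ => 0) (fun x => C * |w x|)
    (hg_meas.mono fun i hi => hi.mul hw.aestronglyMeasurable)
    (hg_bound.mono fun i hi => Eventually.of_forall fun x => by
      rw [norm_mul, norm_eq_abs, norm_eq_abs]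
      exact mul_le_mul_of_nonneg_right (hi x) (abs_nonneg _))
    (hw.abs.const_mul C)
    (Eventually.of_forall fun x => by simpa using (hg_lim x).mul_const (w x))
  simpa using key

theorem stmt_6_general {X : Type*} [MeasurableSpace X] (μ : Measure X)
    (ℓ : X → ℝ) (hℓ : ∀ x, 0 ≤ ℓ x) (hℓm : Measurable ℓ)
    (κ δ : ℝ) (hκ0 : 0 < κ) (hδ : δ < 1 / 2)
    (U : X → ℝ)
    (hUδ : Integrable (fun x => (ℓ x ^ δ) ^ 2 * U x ^ 2) μ) :
    Filter.Tendsto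
      (fun t : ℝ => t ^ ((1 - 2 * δ) / (2 * κ)) *
        Real.sqrt (∫ x, (ℓ x ^ ((1 : ℝ) / 2) * Real.exp (-(t * ℓ x ^ κ))) ^ 2 * U x ^ 2 ∂μ))
      (nhdsWithin 0 (Set.Ioi 0)) (nhds 0) := by
  set b := 1 - 2 * δ
  have hb : 0 < b := by linarith
  set g : ℝ → X → ℝ := fun t x => t ^ (b / κ) * ℓ x ^ b * exp (-(2 * (t * ℓ x ^ κ)))
  have hg_lim : ∀ x, Tendsto (g · x) (𝓝[>] 0) (𝓝 0) := fun x => by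
    have hcont : ContinuousAt (g · x) 0 := by
      fun_prop (disch := exact Or.inr (div_pos hb hκ0).le)
    simpa [g, zero_rpow (div_pos hb hκ0).ne'] using hcont.tendsto.mono_left nhdsWithin_le_nhds
  have hg_bound : ∀ᶠ t in 𝓝[>] 0, ∀ x, |g t x| ≤ (b / κ / 2) ^ (b / κ) :=
    eventually_mem_nhdsWithin.mono fun t (ht : 0 < t) x => by
      rw [abs_of_nonneg (mul_nonneg (mul_nonneg (rpow_nonneg ht.le _) (rpow_nonneg (hℓ x) _))
        (exp_pos _).le)]
      exact rpow_div_mul_rpow_mul_exp_le hκ0 hb ht.le (hℓ x)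
  have hint := tendsto_integral_mul_of_bounded_of_tendsto_zero hUδ
    (Eventually.of_forall fun t => by fun_prop) hg_bound hg_lim
  refine (by simpa using hint.sqrt : Tendsto (fun t => √(∫ x, g t x * _ ∂μ)) _ _).congr' ?_
  filter_upwards [self_mem_nhdsWithin] with t (ht : 0 < t)
  have hpointwise : ∀ x, g t x * ((ℓ x ^ δ) ^ 2 * U x ^ 2) =
      t ^ (b / κ) * ((ℓ x ^ (1 / 2 : ℝ) * exp (-(t * ℓ x ^ κ))) ^ 2 * U x ^ 2) := fun x => by
    rw [sq_rpow_half_mul_exp_neg (hℓ x) δ]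
    ring
  simp only [hpointwise, integral_const_mul]
  rw [sqrt_mul (rpow_nonneg ht.le _), sqrt_eq_rpow, ← rpow_mul ht.le, div_mul_div_comm, mul_one,
    mul_comm κ]

/-- For a positive self-adjoint `L`, `κ ∈ (0,1]`, `δ ∈ (0,1/2)` and `U ∈ H^δ`
(the completion of `D(L)` under `‖L^δ ·‖`), one has
`t^{(1−2δ)/(2κ)} ‖L^{1/2} e^{−tL^κ} U‖ → 0` as `t → 0⁺`; stated in the
multiplication-operator model provided by the spectral theorem: `H = L²(μ)`,
`L` = multiplication by `ℓ ≥ 0`, and `U ∈ H^δ` meaning `∫ ℓ^{2δ} U² < ∞`. -/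
theorem stmt_6 {X : Type*} [MeasurableSpace X] (μ : Measure X)
    (ℓ : X → ℝ) (hℓ : ∀ x, 0 ≤ ℓ x) (hℓm : Measurable ℓ)
    (κ δ : ℝ) (hκ0 : 0 < κ) (hκ1 : κ ≤ 1) (hδ0 : 0 < δ) (hδ : δ < 1 / 2)
    (U : X → ℝ) (hU : Measurable U)
    (hUδ : Integrable (fun x => (ℓ x ^ δ) ^ 2 * U x ^ 2) μ) :
    Filter.Tendsto
      (fun t : ℝ => t ^ ((1 - 2 * δ) / (2 * κ)) *
        Real.sqrt (∫ x, (ℓ x ^ ((1 : ℝ) / 2) * Real.exp (-(t * ℓ x ^ κ))) ^ 2 * U x ^ 2 ∂μ))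
      (nhdsWithin 0 (Set.Ioi 0)) (nhds 0) :=
  stmt_6_general μ ℓ hℓ hℓm κ δ hκ0 hδ U hUδ
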